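/- Let d ≥ 0 and let f_{−1} = 1, f_0, …, f_d be positive integers. Then the following are equivalent: (i) there exists a finite simple graph G such that, for 0 ≤ i ≤ d+1, the number of independent sets of cardinality i in G equals f_{i−1}, and G has no independent set of cardinality d+2 (i.e., the sequence is the face vector of a flag complex); (ii) there exists a finite simple graph H on t vertices (for some t ≥ d+1) such that, for every 0 ≤ j ≤ t, the number of independent sets of cardinality j in the full whiskering H^τ equals Σ_{i=0}^{min(j,d+1)} C(t−i, j−i) f_{i−1} (i.e., the sequence, extended by zeros, is the h-vector of the independence complex of a fully-whiskered graph). -/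

import Mathlib

/-- A finset of vertices is an independent set of the graph `G`. -/
def IsIndep {V : Type*} (G : SimpleGraph V) (s : Finset V) : Prop :=
  ∀ u ∈ s, ∀ v ∈ s, ¬ G.Adj u v

/-- The number of independent sets of cardinality `k` in `G`
(the face number `f_{k-1}` of the independence complex of `G`). -/
noncomputable def indepCount {V : Type*} (G : SimpleGraph V) (k : ℕ) : ℕ :=
  Set.ncard {s : Finset V | IsIndep G s ∧ s.card = k}

/-- The full whiskering `H^τ` of a graph `H`: each vertex `v` (encoded `Sum.inl v`)
receives a new whisker vertex (encoded `Sum.inr v`) joined to it by an edge. -/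
def fullWhisker {W : Type*} (H : SimpleGraph W) : SimpleGraph (W ⊕ W) :=
  SimpleGraph.fromRel fun a b =>
    match a, b with
    | Sum.inl u, Sum.inl v => H.Adj u v
    | Sum.inl v, Sum.inr w => v = w
    | _, _ => False

/-!
An independent set of `H^τ` is `S ⊔ T` with `S` independent in `H` and `T` an arbitrary set of
whiskers avoiding `S`, so `f_{j-1}(H^τ) = ∑ᵢ C(t - i, j - i) f_{i-1}(H)`: the `h`-vector of
`Ind(H^τ)` is the face vector of `Ind(H)`. This transformation is unitriangular, hence the
`h`-vector determines the face vector, and both implications hold with `H = G`.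
-/

open Finset

lemma eq_of_forall_sum_range_mul_eq {R : Type*} [Semiring R] [IsLeftCancelAdd R]
    [IsLeftCancelMulZero R] {c : ℕ → ℕ → R} {a b : ℕ → R} {t : ℕ} (hc : ∀ j ≤ t, c j j ≠ 0)
    (h : ∀ j ≤ t, ∑ i ∈ range (j + 1), c j i * a i = ∑ i ∈ range (j + 1), c j i * b i) :
    ∀ j ≤ t, a j = b j := by
  intro j
  induction j using Nat.strong_induction_on with
  | _ j ih =>
    intro hj
    have hlower : ∑ i ∈ range j, c j i * a i = ∑ i ∈ range j, c j i * b i :=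
      sum_congr rfl fun i hi => by rw [ih i (mem_range.1 hi) ((mem_range.1 hi).le.trans hj)]
    have hsum := h j hj
    rw [sum_range_succ, sum_range_succ, hlower] at hsum
    exact mul_left_cancel₀ (hc j hj) (add_left_cancel hsum)

lemma sum_range_min_succ_eq_sum_ite {M : Type*} [AddCommMonoid M] (g : ℕ → M) (j n : ℕ) :
    ∑ i ∈ range (min j n + 1), g i = ∑ i ∈ range (j + 1), if i ≤ n then g i else 0 := by
  rw [← sum_filter]
  congr 1
  ext i
  simp only [mem_range, mem_filter]
  omega

section Counting

variable {V : Type*}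

lemma IsIndep.mono {G : SimpleGraph V} {s t : Finset V} (hs : IsIndep G s) (hts : t ⊆ s) :
    IsIndep G t :=
  fun u hu v hv => hs u (hts hu) v (hts hv)

variable [Fintype V]

open Classical in
lemma indepCount_eq_card_filter (G : SimpleGraph V) (k : ℕ) :
    indepCount G k = #{s : Finset V | IsIndep G s ∧ #s = k} := by
  rw [indepCount, ← Set.ncard_coe_finset]
  congr
  ext
  simp

lemma indepCount_eq_zero_of_le {G : SimpleGraph V} {m k : ℕ} (hm : indepCount G m = 0)
    (hmk : m ≤ k) : indepCount G k = 0 := by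
  classical
  rw [indepCount_eq_card_filter, card_eq_zero, filter_eq_empty_iff] at hm ⊢
  rintro s - ⟨hs, rfl⟩
  obtain ⟨t, hts, rfl⟩ := exists_subset_card_eq hmk
  exact hm (mem_univ t) ⟨hs.mono hts, rfl⟩

lemma indepCount_eq_zero_of_card_lt (G : SimpleGraph V) {k : ℕ} (hk : Fintype.card V < k) :
    indepCount G k = 0 := by
  classical
  rw [indepCount_eq_card_filter, card_eq_zero, filter_eq_empty_iff]
  rintro s - ⟨-, rfl⟩
  exact hk.not_ge (card_le_univ s)

lemma indepCount_eq_ite_iff (G : SimpleGraph V) (n : ℕ) (f : ℕ → ℕ) :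
    (∀ i ≤ n, indepCount G i = f i) ∧ indepCount G (n + 1) = 0 ↔
      ∀ i, indepCount G i = if i ≤ n then f i else 0 := by
  constructor
  · rintro ⟨hf, hzero⟩ i
    split_ifs with hi
    · exact hf i hi
    · exact indepCount_eq_zero_of_le hzero (by omega)
  · intro h
    exact ⟨fun i hi => by rw [h, if_pos hi], by rw [h, if_neg (by omega)]⟩

end Counting

namespace fullWhisker

variable {W : Type*} (H : SimpleGraph W) (u v : W)

@[simp] lemma adj_inl_inl : (fullWhisker H).Adj (.inl u) (.inl v) ↔ H.Adj u v := by
  simp only [fullWhisker, SimpleGraph.fromRel_adj]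
  exact ⟨fun h => h.2.elim id H.adj_symm, fun h => ⟨by simpa using h.ne, .inl h⟩⟩

@[simp] lemma adj_inl_inr : (fullWhisker H).Adj (.inl u) (.inr v) ↔ u = v := by
  simp [fullWhisker]

@[simp] lemma adj_inr_inl : (fullWhisker H).Adj (.inr u) (.inl v) ↔ u = v := by
  simp [fullWhisker, eq_comm]

@[simp] lemma not_adj_inr_inr : ¬ (fullWhisker H).Adj (.inr u) (.inr v) := by
  simp [fullWhisker]

end fullWhisker

section Whiskering

variable {W : Type*}

lemma isIndep_fullWhisker_iff (H : SimpleGraph W) (s : Finset (W ⊕ W)) :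
    IsIndep (fullWhisker H) s ↔ IsIndep H s.toLeft ∧ Disjoint s.toLeft s.toRight := by
  simp only [IsIndep, Sum.forall, mem_toLeft, mem_toRight, disjoint_left, fullWhisker.adj_inl_inl,
    fullWhisker.adj_inl_inr, fullWhisker.adj_inr_inl, fullWhisker.not_adj_inr_inr]
  grind

variable [Fintype W]

open Classical in
lemma card_filter_toLeft_eq (H : SimpleGraph W) {S : Finset W} (hS : IsIndep H S) {j : ℕ}
    (hSj : #S ≤ j) :
    #{s : Finset (W ⊕ W) | (IsIndep (fullWhisker H) s ∧ #s = j) ∧ s.toLeft = S} =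
      (Fintype.card W - #S).choose (j - #S) := by
  rw [← card_compl, ← card_powersetCard (j - #S) Sᶜ]
  refine card_nbij' toRight (S.disjSum ·) ?_ ?_ ?_ ?_
  · rintro s hs
    simp only [mem_coe, mem_filter, mem_univ, true_and, isIndep_fullWhisker_iff] at hs
    obtain ⟨⟨⟨-, hdisj⟩, rfl⟩, rfl⟩ := hs
    have := card_toLeft_add_card_toRight (u := s)
    simp only [mem_coe, mem_powersetCard, subset_compl_iff_disjoint_left]
    exact ⟨hdisj, by omega⟩
  · rintro T hT
    simp only [mem_coe, mem_powersetCard, subset_compl_iff_disjoint_left] at hT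
    simp only [mem_coe, mem_filter, mem_univ, true_and, isIndep_fullWhisker_iff,
      toLeft_disjSum, toRight_disjSum, card_disjSum, and_true]
    exact ⟨⟨hS, hT.1⟩, by omega⟩
  · rintro s hs
    simp only [mem_coe, mem_filter, mem_univ, true_and] at hs
    simp only [← hs.2, toLeft_disjSum_toRight]
  · intro T _
    simp only [toRight_disjSum]

lemma indepCount_fullWhisker (H : SimpleGraph W) (j : ℕ) :
    indepCount (fullWhisker H) j =
      ∑ i ∈ range (j + 1), (Fintype.card W - i).choose (j - i) * indepCount H i := by
  classical
  set A : Finset (Finset W) := {S | IsIndep H S ∧ #S ≤ j} with hA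
  set B : Finset (Finset (W ⊕ W)) := {s | IsIndep (fullWhisker H) s ∧ #s = j} with hB
  have hleft : Set.MapsTo toLeft (B : Set (Finset (W ⊕ W))) A := by
    intro s hs
    simp only [mem_coe, mem_filter, mem_univ, true_and, isIndep_fullWhisker_iff, hA, hB] at hs ⊢
    exact ⟨hs.1.1, hs.2 ▸ card_toLeft_le⟩
  have hcard : ∀ S ∈ A, #S ∈ range (j + 1) := by
    intro S hS
    simp only [hA, mem_filter, mem_univ, true_and] at hS
    exact mem_range_succ_iff.2 hS.2
  calc indepCount (fullWhisker H) j
      = ∑ S ∈ A, (Fintype.card W - #S).choose (j - #S) := by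
        rw [indepCount_eq_card_filter, card_eq_sum_card_fiberwise hleft]
        refine sum_congr rfl fun S hS => ?_
        simp only [hA, mem_filter, mem_univ, true_and] at hS
        rw [filter_filter, card_filter_toLeft_eq H hS.1 hS.2]
    _ = ∑ i ∈ range (j + 1), ∑ S ∈ A with #S = i, (Fintype.card W - #S).choose (j - #S) :=
        (sum_fiberwise_of_maps_to hcard _).symm
    _ = _ := by
      refine sum_congr rfl fun i hi => ?_
      have hAi : {S ∈ A | #S = i} = ({S | IsIndep H S ∧ #S = i} : Finset (Finset W)) := by
        ext S
        simp only [hA, mem_filter, mem_univ, true_and, mem_range] at hi ⊢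
        grind
      rw [sum_congr rfl fun S hS => by rw [(mem_filter.1 hS).2], sum_const, hAi,
        indepCount_eq_card_filter, smul_eq_mul, mul_comm]

lemma indepCount_eq_of_indepCount_fullWhisker_eq {H : SimpleGraph W} {b : ℕ → ℕ}
    (h : ∀ j ≤ Fintype.card W, indepCount (fullWhisker H) j =
      ∑ i ∈ range (j + 1), (Fintype.card W - i).choose (j - i) * b i) :
    ∀ i ≤ Fintype.card W, indepCount H i = b i :=
  eq_of_forall_sum_range_mul_eq (c := fun j i => (Fintype.card W - i).choose (j - i)) (by simp)
    fun j hj => by rw [← indepCount_fullWhisker, h j hj]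

end Whiskering

theorem faceVector_flag_iff_hVector_fullWhisker_general (d : ℕ) (f : ℕ → ℕ)
    (hfpos : ∀ i ≤ d + 1, 0 < f i) :
    (∃ (V : Type) (_ : Fintype V) (G : SimpleGraph V),
        (∀ i ≤ d + 1, indepCount G i = f i) ∧ indepCount G (d + 2) = 0) ↔
    (∃ (W : Type) (_ : Fintype W) (H : SimpleGraph W),
        d + 1 ≤ Fintype.card W ∧
        ∀ j ≤ Fintype.card W,
          indepCount (fullWhisker H) j =
            ∑ i ∈ Finset.range (min j (d + 1) + 1),
              (Fintype.card W - i).choose (j - i) * f i) := by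
  set b : ℕ → ℕ := fun i => if i ≤ d + 1 then f i else 0
  have hsum (t j : ℕ) : ∑ i ∈ range (min j (d + 1) + 1), (t - i).choose (j - i) * f i =
      ∑ i ∈ range (j + 1), (t - i).choose (j - i) * b i := by
    simp only [b, mul_ite, mul_zero]
    exact sum_range_min_succ_eq_sum_ite _ j (d + 1)
  constructor
  · rintro ⟨V, hV, G, hG⟩
    have hGb : ∀ i, indepCount G i = b i := (indepCount_eq_ite_iff G (d + 1) f).1 hG
    refine ⟨V, hV, G, ?_, fun j _ => by simp only [indepCount_fullWhisker, hsum, hGb]⟩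
    by_contra! hsmall
    have hzero := indepCount_eq_zero_of_card_lt G hsmall
    rw [hG.1 _ le_rfl] at hzero
    exact (hfpos _ le_rfl).ne' hzero
  · rintro ⟨W, hW, H, hdW, hH⟩
    have hHb := indepCount_eq_of_indepCount_fullWhisker_eq fun j hj => (hH j hj).trans (hsum _ j)
    refine ⟨W, hW, H, (indepCount_eq_ite_iff H (d + 1) f).2 fun i => ?_⟩
    rcases le_or_gt i (Fintype.card W) with hi | hi
    · exact hHb i hi
    · rw [indepCount_eq_zero_of_card_lt H hi, if_neg (by omega)]

/-- A sequence `f_{-1} = 1, f_0, …, f_d` of positive integers is the face vector of a flag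
complex if and only if it is (extended by zeros) the `h`-vector of the independence complex
of a fully-whiskered graph. -/
theorem faceVector_flag_iff_hVector_fullWhisker (d : ℕ) (f : ℕ → ℕ) (hf0 : f 0 = 1)
    (hfpos : ∀ i ≤ d + 1, 0 < f i) :
    (∃ (V : Type) (_ : Fintype V) (G : SimpleGraph V),
        (∀ i ≤ d + 1, indepCount G i = f i) ∧ indepCount G (d + 2) = 0) ↔
    (∃ (W : Type) (_ : Fintype W) (H : SimpleGraph W),
        d + 1 ≤ Fintype.card W ∧
        ∀ j ≤ Fintype.card W,
          indepCount (fullWhisker H) j =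
            ∑ i ∈ Finset.range (min j (d + 1) + 1),
              (Fintype.card W - i).choose (j - i) * f i) :=
  faceVector_flag_iff_hVector_fullWhisker_general d f hfpos
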